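/- In the unlearning setup with coherence definitions, for every integer k ≥ 2 the mix-Hessian satisfies Tr(D^k) ≤ (n_r n_f)^{1−k} λ_max(S)^k, where S is the mix-coherence matrix. -/

import Mathlib

/-!
Write `D_p = B_p²` with `B_p = D_p^{1/2}` symmetric. Cycling the trace,
`Tr(D_{p₁} ⋯ D_{p_k}) = Tr((B_{p_k} B_{p₁})(B_{p₁} B_{p₂}) ⋯ (B_{p_{k-1}} B_{p_k}))`, which by
submultiplicativity and Cauchy–Schwarz for the Frobenius norm is at most
`S_{p_k p₁} S_{p₁ p₂} ⋯ S_{p_{k-1} p_k}`; summing over all index tuples gives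
`Tr(D^k) ≤ (n_r n_f)^{-k} Tr(S^k)`. As `S` is symmetric with nonnegative entries, comparing the
Rayleigh quotients of an eigenvector `v` and of `|v|` shows that every eigenvalue of `S` has absolute
value at most `λ_max(S)`, so `Tr(S^k) ≤ n_r n_f λ_max(S)^k`.
-/

open Matrix Filter Finset Set
open scoped BigOperators

noncomputable section

/-- Frobenius norm of a real square matrix. -/
def frob {n : Type*} [Fintype n] (M : Matrix n n ℝ) : ℝ :=
  Real.sqrt (∑ i, ∑ j, (M i j) ^ 2)

open Classical in
/-- The positive semidefinite square root of a matrix (junk value `0` on non-PSD input). -/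
def psdSqrt {n : Type*} [Fintype n] [DecidableEq n] (A : Matrix n n ℝ) : Matrix n n ℝ :=
  if h : A.PosSemidef then
    h.1.eigenvectorUnitary.1 * diagonal (fun i => Real.sqrt (h.1.eigenvalues i)) *
      (star h.1.eigenvectorUnitary : Matrix n n ℝ)
  else 0

open Classical in
/-- The largest eigenvalue of a symmetric real matrix (junk value `0` otherwise). -/
def lamMax {n : Type*} [Fintype n] [DecidableEq n] (A : Matrix n n ℝ) : ℝ :=
  if h : A.IsHermitian then ⨆ i, h.eigenvalues i else 0

/-- Probability of observing the Bernoulli(B/n) selection pattern `x`. -/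
def selProb (n B : ℕ) (x : Fin n → Bool) : ℝ :=
  ∏ i, if x i then (B : ℝ) / n else 1 - (B : ℝ) / n

/-- Average Hessian of a family. -/
def Hbar {d n : ℕ} (H : Fin n → Matrix (Fin d) (Fin d) ℝ) : Matrix (Fin d) (Fin d) ℝ :=
  (n : ℝ)⁻¹ • ∑ i, H i

/-- Mean update operator `J = I − η(1−α)H_R + ηα H_F`. -/
def Jbar {d nr nf : ℕ} (η α : ℝ) (HR : Fin nr → Matrix (Fin d) (Fin d) ℝ)
    (HF : Fin nf → Matrix (Fin d) (Fin d) ℝ) : Matrix (Fin d) (Fin d) ℝ :=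
  1 - (η * (1 - α)) • Hbar HR + (η * α) • Hbar HF

/-- Random update operator for the batch-selection pattern `x`. -/
def Jop {d nr nf : ℕ} (η α : ℝ) (B : ℕ) (HR : Fin nr → Matrix (Fin d) (Fin d) ℝ)
    (HF : Fin nf → Matrix (Fin d) (Fin d) ℝ)
    (x : (Fin nr → Bool) × (Fin nf → Bool)) : Matrix (Fin d) (Fin d) ℝ :=
  1 - (η * (1 - α) / B) • (∑ r, if x.1 r then HR r else 0)
    + (η * α / B) • (∑ f, if x.2 f then HF f else 0)

/-- `C_r = η²(1−α)²(1/n_r)(1/B − 1/n_r)`. -/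
def Crc (η α : ℝ) (B nr : ℕ) : ℝ :=
  η ^ 2 * (1 - α) ^ 2 * (nr : ℝ)⁻¹ * ((B : ℝ)⁻¹ - (nr : ℝ)⁻¹)

/-- `C_f = η²α²(1/n_f)(1/B − 1/n_f)`. -/
def Cfc (η α : ℝ) (B nf : ℕ) : ℝ :=
  η ^ 2 * α ^ 2 * (nf : ℝ)⁻¹ * ((B : ℝ)⁻¹ - (nf : ℝ)⁻¹)

/-- Noise-accumulation matrices `N_k`. -/
def Nmat {d nr nf : ℕ} (η α : ℝ) (B : ℕ) (HR : Fin nr → Matrix (Fin d) (Fin d) ℝ)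
    (HF : Fin nf → Matrix (Fin d) (Fin d) ℝ) : ℕ → Matrix (Fin d) (Fin d) ℝ
  | 0 => 1
  | k + 1 =>
      Cfc η α B nf • ∑ f, HF f * Nmat η α B HR HF k * HF f
        + Crc η α B nr • ∑ r, HR r * Nmat η α B HR HF k * HR r

/-- `W_k = J_{k−1} ⋯ J_1 J_0` for a finite sequence of batch selections. -/
def Wk {d nr nf : ℕ} (η α : ℝ) (B : ℕ) (HR : Fin nr → Matrix (Fin d) (Fin d) ℝ)
    (HF : Fin nf → Matrix (Fin d) (Fin d) ℝ) {k : ℕ}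
    (s : Fin k → (Fin nr → Bool) × (Fin nf → Bool)) : Matrix (Fin d) (Fin d) ℝ :=
  (List.ofFn fun i => Jop η α B HR HF (s i)).reverse.prod

/-- `E‖w_k‖² = E Tr(W_k W_kᵀ)`, the expectation taken over the i.i.d. Bernoulli
batch selections of the `k` steps. -/
def Ewk2 {d nr nf : ℕ} (η α : ℝ) (B : ℕ) (HR : Fin nr → Matrix (Fin d) (Fin d) ℝ)
    (HF : Fin nf → Matrix (Fin d) (Fin d) ℝ) (k : ℕ) : ℝ :=
  ∑ s : Fin k → (Fin nr → Bool) × (Fin nf → Bool),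
    (∏ i, selProb nr B (s i).1 * selProb nf B (s i).2) *
      (Wk η α B HR HF s * (Wk η α B HR HF s)ᵀ).trace

/-- `E[(e₁ᵀ w_k)²]`, i.e. the `(i0,i0)` entry of `E[W_k W_kᵀ]`. -/
def Ee1 {d nr nf : ℕ} (η α : ℝ) (B : ℕ) (HR : Fin nr → Matrix (Fin d) (Fin d) ℝ)
    (HF : Fin nf → Matrix (Fin d) (Fin d) ℝ) (i0 : Fin d) (k : ℕ) : ℝ :=
  ∑ s : Fin k → (Fin nr → Bool) × (Fin nf → Bool),
    (∏ i, selProb nr B (s i).1 * selProb nf B (s i).2) *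
      ((Wk η α B HR HF s * (Wk η α B HR HF s)ᵀ) i0 i0)

/-- Mixed Hessian `D_{rf} = C'_r H_r^R + C'_f H_f^F` for a retain/forget pair. -/
def Drf {d nr nf : ℕ} (Cr' Cf' : ℝ) (HR : Fin nr → Matrix (Fin d) (Fin d) ℝ)
    (HF : Fin nf → Matrix (Fin d) (Fin d) ℝ) (p : Fin nr × Fin nf) :
    Matrix (Fin d) (Fin d) ℝ :=
  Cr' • HR p.1 + Cf' • HF p.2

/-- Mix-Hessian `D = (1/(n_r n_f)) Σ_{r,f} D_{rf}`. -/
def Dmix {d nr nf : ℕ} (Cr' Cf' : ℝ) (HR : Fin nr → Matrix (Fin d) (Fin d) ℝ)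
    (HF : Fin nf → Matrix (Fin d) (Fin d) ℝ) : Matrix (Fin d) (Fin d) ℝ :=
  ((nr : ℝ) * nf)⁻¹ • ∑ p : Fin nr × Fin nf, Drf Cr' Cf' HR HF p

/-- Mix-coherence matrix `S_{(r,f),(r',f')} = ‖D_{rf}^{1/2} D_{r'f'}^{1/2}‖_F`. -/
def Smat {d nr nf : ℕ} (Cr' Cf' : ℝ) (HR : Fin nr → Matrix (Fin d) (Fin d) ℝ)
    (HF : Fin nf → Matrix (Fin d) (Fin d) ℝ) :
    Matrix (Fin nr × Fin nf) (Fin nr × Fin nf) ℝ :=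
  Matrix.of fun p q =>
    frob (psdSqrt (Drf Cr' Cf' HR HF p) * psdSqrt (Drf Cr' Cf' HR HF q))

/-- Unlearning coherence `σ = λ_max(S) / max_{(r,f)} λ_max(D_{rf})`. -/
def cohSigma {d nr nf : ℕ} (Cr' Cf' : ℝ) (HR : Fin nr → Matrix (Fin d) (Fin d) ℝ)
    (HF : Fin nf → Matrix (Fin d) (Fin d) ℝ) : ℝ :=
  lamMax (Smat Cr' Cf' HR HF) / ⨆ p : Fin nr × Fin nf, lamMax (Drf Cr' Cf' HR HF p)

/-- Stacked filter-weight vector of the two-layer ReLU CNN signal-plus-noise model. -/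
def wvec (d mfil : ℕ) (μ ξi : Fin d → ℝ) (yi : ℝ)
    (ai bi : Bool → Fin mfil → Bool) : (Bool × Fin mfil) × Fin d → ℝ :=
  fun p =>
    ((if p.1.1 then (1 : ℝ) else -1) / mfil) *
      ((if ai p.1.1 p.1.2 then (1 : ℝ) else 0) * μ p.2 +
        (if bi p.1.1 p.1.2 then (1 : ℝ) else 0) * yi * ξi p.2)

/-- Per-sample Hessian `H_i = ℓ''_i w_i w_iᵀ` of the signal-plus-noise model. -/
def hessCNN (d mfil : ℕ) (μ ξi : Fin d → ℝ) (yi ℓi : ℝ)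
    (ai bi : Bool → Fin mfil → Bool) :
    Matrix ((Bool × Fin mfil) × Fin d) ((Bool × Fin mfil) × Fin d) ℝ :=
  ℓi • vecMulVec (wvec d mfil μ ξi yi ai bi) (wvec d mfil μ ξi yi ai bi)

/-- Mixed Hessian `D_{rf} = C'_r H_r + C'_f H_{n_r+f}` in the CNN model, with the
retain set given by the first `n_r` samples and the forget set by the last `n_f`. -/
def DrfCNN (d mfil nr nf : ℕ) (μ : Fin d → ℝ) (ξ : Fin (nr + nf) → Fin d → ℝ)
    (y ℓ : Fin (nr + nf) → ℝ) (a b : Fin (nr + nf) → Bool → Fin mfil → Bool)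
    (Cr' Cf' : ℝ) (p : Fin nr × Fin nf) :
    Matrix ((Bool × Fin mfil) × Fin d) ((Bool × Fin mfil) × Fin d) ℝ :=
  Cr' • hessCNN d mfil μ (ξ (Fin.castAdd nf p.1)) (y (Fin.castAdd nf p.1))
        (ℓ (Fin.castAdd nf p.1)) (a (Fin.castAdd nf p.1)) (b (Fin.castAdd nf p.1))
    + Cf' • hessCNN d mfil μ (ξ (Fin.natAdd nr p.2)) (y (Fin.natAdd nr p.2))
        (ℓ (Fin.natAdd nr p.2)) (a (Fin.natAdd nr p.2)) (b (Fin.natAdd nr p.2))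

/-- Mix-coherence matrix of the CNN model. -/
def SmatCNN (d mfil nr nf : ℕ) (μ : Fin d → ℝ) (ξ : Fin (nr + nf) → Fin d → ℝ)
    (y ℓ : Fin (nr + nf) → ℝ) (a b : Fin (nr + nf) → Bool → Fin mfil → Bool)
    (Cr' Cf' : ℝ) : Matrix (Fin nr × Fin nf) (Fin nr × Fin nf) ℝ :=
  Matrix.of fun p q =>
    frob (psdSqrt (DrfCNN d mfil nr nf μ ξ y ℓ a b Cr' Cf' p) *
      psdSqrt (DrfCNN d mfil nr nf μ ξ y ℓ a b Cr' Cf' q))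


namespace Matrix

section Frobenius

attribute [local instance] frobeniusSeminormedAddCommGroup frobeniusNormedRing

variable {m ι : Type*} [Fintype m] [Fintype ι] [DecidableEq m] [DecidableEq ι]

theorem frob_eq_frobenius_norm (M : Matrix m m ℝ) : frob M = ‖M‖ := by
  simp [frobenius_norm_def, frob, Real.sqrt_eq_rpow]

theorem trace_mul_le_frobenius_norm_mul (A B : Matrix m m ℝ) :
    (A * B).trace ≤ ‖A‖ * ‖B‖ := by
  have h := Real.sum_mul_le_sqrt_mul_sqrt (univ : Finset (m × m))
    (fun p => A p.1 p.2) (fun p => Bᵀ p.1 p.2)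
  simp only [Fintype.sum_prod_type] at h
  rw [← frobenius_norm_transpose B, ← frob_eq_frobenius_norm, ← frob_eq_frobenius_norm]
  simpa [trace, mul_apply, frob] using h

variable (B : ι → Matrix m m ℝ) (S : Matrix ι ι ℝ) (hS : ∀ p q, S p q = ‖B p * B q‖)
include hS

theorem frobenius_norm_mul_pow_sum_mul_self_mul_le (k : ℕ) (p q : ι) :
    ‖B p * (∑ r, B r * B r) ^ k * B q‖ ≤ (S ^ (k + 1)) p q := by
  induction k generalizing q with
  | zero => simp [hS]
  | succ k ih =>
    have hsplit : B p * (∑ r, B r * B r) ^ (k + 1) * B q =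
        ∑ r, (B p * (∑ r, B r * B r) ^ k * B r) * (B r * B q) := by
      simp only [pow_succ, Matrix.mul_sum, Matrix.sum_mul, Matrix.mul_assoc]
    calc ‖B p * (∑ r, B r * B r) ^ (k + 1) * B q‖
        ≤ ∑ r, ‖B p * (∑ r, B r * B r) ^ k * B r‖ * ‖B r * B q‖ := by
          rw [hsplit]
          exact (norm_sum_le _ _).trans (sum_le_sum fun r _ => norm_mul_le _ _)
      _ ≤ ∑ r, (S ^ (k + 1)) p r * S r q := by
          refine sum_le_sum fun r _ => ?_
          rw [hS r q]
          exact mul_le_mul_of_nonneg_right (ih r) (norm_nonneg _)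
      _ = (S ^ (k + 2)) p q := by rw [pow_succ _ (k + 1), mul_apply]

theorem trace_pow_sum_mul_self_le (k : ℕ) :
    ((∑ r, B r * B r) ^ (k + 2)).trace ≤ (S ^ (k + 2)).trace := by
  set D := ∑ r, B r * B r
  have hexpand : (D ^ (k + 2)).trace =
      ∑ p, ∑ q, ((B p * D ^ k * B q) * (B q * B p)).trace := by
    rw [pow_succ, pow_succ']
    generalize D ^ k = X
    simp only [D, Matrix.sum_mul, Matrix.mul_sum, trace_sum]
    rw [sum_comm]
    refine sum_congr rfl fun p _ => sum_congr rfl fun q _ => ?_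
    simp only [Matrix.mul_assoc]
    rw [trace_mul_comm]
    simp only [Matrix.mul_assoc]
  calc (D ^ (k + 2)).trace
      = ∑ p, ∑ q, ((B p * D ^ k * B q) * (B q * B p)).trace := hexpand
    _ ≤ ∑ p, ∑ q, (S ^ (k + 1)) p q * S q p := by
      gcongr with p _ q
      rw [hS q p]
      exact (trace_mul_le_frobenius_norm_mul _ _).trans <| by
        gcongr
        exact frobenius_norm_mul_pow_sum_mul_self_mul_le B S hS k p q
    _ = (S ^ (k + 2)).trace := by simp [pow_succ _ (k + 1), trace, mul_apply]

omit [Fintype ι] [DecidableEq ι] in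
theorem isHermitian_of_eq_frobenius_norm_mul (hB : ∀ p, (B p)ᵀ = B p) : S.IsHermitian := by
  ext p q
  rw [conjTranspose_apply, star_trivial, hS, hS, ← frobenius_norm_transpose, transpose_mul, hB, hB]

end Frobenius

variable {ι : Type*} [Fintype ι] [DecidableEq ι]

theorem IsHermitian.trace_pow_eq_sum_eigenvalues_pow {𝕜 : Type*} [RCLike 𝕜] {A : Matrix ι ι 𝕜}
    (hA : A.IsHermitian) (k : ℕ) : (A ^ k).trace = ∑ i, (hA.eigenvalues i : 𝕜) ^ k := by
  conv_lhs => rw [hA.spectral_theorem, ← map_pow, diagonal_pow, Unitary.conjStarAlgAut_apply,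
    trace_mul_cycle, Unitary.coe_star_mul_self, Matrix.one_mul, trace_diagonal]
  rfl

theorem IsHermitian.dotProduct_mulVec_le_iSup_eigenvalues_mul {S : Matrix ι ι ℝ}
    (hS : S.IsHermitian) (x : ι → ℝ) :
    x ⬝ᵥ S *ᵥ x ≤ (⨆ i, hS.eigenvalues i) * (x ⬝ᵥ x) := by
  set c := ⨆ i, hS.eigenvalues i
  have hpsd : (c • 1 - S).PosSemidef := by
    have hdiag : c • 1 - S = Unitary.conjStarAlgAut ℝ _ hS.eigenvectorUnitary
        (diagonal fun i => c - hS.eigenvalues i) := by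
      have : (diagonal fun i => c - hS.eigenvalues i) =
          c • 1 - diagonal (RCLike.ofReal ∘ hS.eigenvalues) := by
        ext i j
        by_cases h : i = j <;> simp [h]
      rw [this, map_sub, map_smul, map_one, ← hS.spectral_theorem]
    rw [hdiag, Unitary.conjStarAlgAut_apply,
      (Unitary.isUnit_coe).posSemidef_star_right_conjugate_iff, posSemidef_diagonal_iff]
    exact fun i => sub_nonneg.2 (le_ciSup (Set.finite_range _).bddAbove i)
  have := hpsd.dotProduct_mulVec_nonneg x
  simpa [sub_mulVec, smul_mulVec, dotProduct_sub, dotProduct_smul] using this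

omit [DecidableEq ι] in
theorem abs_dotProduct_mulVec_le_of_nonneg {S : Matrix ι ι ℝ} (hnn : ∀ p q, 0 ≤ S p q)
    (x : ι → ℝ) : |x ⬝ᵥ S *ᵥ x| ≤ |x| ⬝ᵥ S *ᵥ |x| := by
  simp only [dotProduct, mulVec]
  refine (abs_sum_le_sum_abs _ _).trans (sum_le_sum fun i _ => ?_)
  rw [abs_mul, Pi.abs_apply]
  refine mul_le_mul_of_nonneg_left ((abs_sum_le_sum_abs _ _).trans_eq (sum_congr rfl fun j _ => ?_))
    (abs_nonneg _)
  rw [abs_mul, abs_of_nonneg (hnn i j), Pi.abs_apply]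

theorem IsHermitian.abs_eigenvalues_le_iSup_of_nonneg {S : Matrix ι ι ℝ} (hS : S.IsHermitian)
    (hnn : ∀ p q, 0 ≤ S p q) (j : ι) : |hS.eigenvalues j| ≤ ⨆ i, hS.eigenvalues i := by
  set v : ι → ℝ := ⇑(hS.eigenvectorBasis j)
  have hv : v ⬝ᵥ v = 1 := by
    have h := real_inner_self_eq_norm_sq (hS.eigenvectorBasis j)
    rwa [hS.eigenvectorBasis.orthonormal.1 j, one_pow, EuclideanSpace.inner_eq_star_dotProduct,
      star_trivial] at h
  have hval : hS.eigenvalues j = v ⬝ᵥ S *ᵥ v := by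
    simpa using hS.eigenvalues_eq j
  have habs : |v| ⬝ᵥ |v| = 1 := by
    rw [← hv]; simp [dotProduct, Pi.abs_apply, abs_mul_abs_self]
  calc |hS.eigenvalues j| = |v ⬝ᵥ S *ᵥ v| := by rw [hval]
    _ ≤ |v| ⬝ᵥ S *ᵥ |v| := abs_dotProduct_mulVec_le_of_nonneg hnn v
    _ ≤ ⨆ i, hS.eigenvalues i := by
      simpa [habs] using hS.dotProduct_mulVec_le_iSup_eigenvalues_mul |v|

theorem IsHermitian.trace_pow_le_card_mul_iSup_eigenvalues_pow_of_nonneg {S : Matrix ι ι ℝ}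
    (hS : S.IsHermitian) (hnn : ∀ p q, 0 ≤ S p q) (k : ℕ) :
    (S ^ k).trace ≤ Fintype.card ι * (⨆ i, hS.eigenvalues i) ^ k := by
  rw [hS.trace_pow_eq_sum_eigenvalues_pow]
  calc ∑ i, (hS.eigenvalues i : ℝ) ^ k ≤ ∑ _i : ι, (⨆ i, hS.eigenvalues i) ^ k := by
        refine sum_le_sum fun i _ => (le_abs_self _).trans ?_
        rw [abs_pow]
        exact pow_le_pow_left₀ (abs_nonneg _) (hS.abs_eigenvalues_le_iSup_of_nonneg hnn i) k
    _ = Fintype.card ι * (⨆ i, hS.eigenvalues i) ^ k := by simp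

namespace PosSemidef

variable {m : Type*} [Fintype m] [DecidableEq m] {A : Matrix m m ℝ}

theorem psdSqrt_eq_cfc (hA : A.PosSemidef) : psdSqrt A = cfc Real.sqrt A := by
  rw [psdSqrt, dif_pos hA, hA.1.cfc_eq]
  rfl

theorem psdSqrt_mul_self (hA : A.PosSemidef) : psdSqrt A * psdSqrt A = A := by
  rw [hA.psdSqrt_eq_cfc, ← cfc_mul Real.sqrt Real.sqrt A]
  conv_rhs => rw [← cfc_id' ℝ A hA.1]
  refine cfc_congr fun x hx => Real.mul_self_sqrt ?_
  obtain ⟨i, rfl⟩ := hA.1.spectrum_real_eq_range_eigenvalues ▸ hx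
  exact hA.eigenvalues_nonneg i

theorem transpose_psdSqrt (hA : A.PosSemidef) : (psdSqrt A)ᵀ = psdSqrt A := by
  rw [← conjTranspose_eq_transpose_of_trivial, hA.psdSqrt_eq_cfc]
  exact (IsSelfAdjoint.cfc (f := Real.sqrt) (a := A)).star_eq

end PosSemidef

end Matrix

theorem lamMax_eq_iSup_eigenvalues {ι : Type*} [Fintype ι] [DecidableEq ι] {S : Matrix ι ι ℝ}
    (hS : S.IsHermitian) : lamMax S = ⨆ i, hS.eigenvalues i :=
  dif_pos hS

theorem trace_pow_sum_psdSqrt_le {m ι : Type*} [Fintype m] [Fintype ι] [DecidableEq m] [DecidableEq ι]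
    (D : ι → Matrix m m ℝ) (hD : ∀ p, (D p).PosSemidef) (k : ℕ) :
    ((∑ p, D p) ^ (k + 2)).trace ≤
      Fintype.card ι * lamMax (of fun p q => frob (psdSqrt (D p) * psdSqrt (D q))) ^ (k + 2) := by
  set B := fun p => psdSqrt (D p)
  set S : Matrix ι ι ℝ := of fun p q => frob (B p * B q)
  have hS : ∀ p q, S p q = _ := fun p q => frob_eq_frobenius_norm (B p * B q)
  have hSH := isHermitian_of_eq_frobenius_norm_mul B S hS fun p => (hD p).transpose_psdSqrt
  have hsum : ∑ p, D p = ∑ p, B p * B p := by simp only [B, fun p => (hD p).psdSqrt_mul_self]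
  rw [hsum, lamMax_eq_iSup_eigenvalues hSH]
  exact (trace_pow_sum_mul_self_le B S hS k).trans
    (hSH.trace_pow_le_card_mul_iSup_eigenvalues_pow_of_nonneg (fun _ _ => Real.sqrt_nonneg _) _)

theorem stmt13_general (d nr nf : ℕ)
    (HR : Fin nr → Matrix (Fin d) (Fin d) ℝ) (HF : Fin nf → Matrix (Fin d) (Fin d) ℝ)
    (hHR : ∀ r, (HR r).PosSemidef) (hHF : ∀ f, (HF f).PosSemidef)
    (Cr' Cf' : ℝ) (hCr : 0 ≤ Cr') (hCf : 0 ≤ Cf') :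
    ∀ k : ℕ, 2 ≤ k →
      ((Dmix Cr' Cf' HR HF ^ k).trace) ≤
        ((nr : ℝ) * nf) ^ ((1 : ℤ) - (k : ℤ)) * lamMax (Smat Cr' Cf' HR HF) ^ k := by
  intro k hk
  obtain ⟨j, rfl⟩ : ∃ j, k = j + 2 := ⟨k - 2, by omega⟩
  set N : ℝ := nr * nf
  have hD : ∀ p, (Drf Cr' Cf' HR HF p).PosSemidef := fun p =>
    ((hHR p.1).smul hCr).add ((hHF p.2).smul hCf)
  have hbound := trace_pow_sum_psdSqrt_le (Drf Cr' Cf' HR HF) hD j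
  have hcard : (Fintype.card (Fin nr × Fin nf) : ℝ) = N := by simp [N]
  have hscale : N⁻¹ ^ (j + 2) * N = N ^ ((1 : ℤ) - ((j + 2 : ℕ) : ℤ)) := by
    rcases eq_or_ne N 0 with hN | hN
    · rw [hN, mul_zero, _root_.zero_zpow _ (by omega)]
    · rw [zpow_sub₀ hN, zpow_one, zpow_natCast, inv_pow, div_eq_mul_inv, mul_comm]
  calc (Dmix Cr' Cf' HR HF ^ (j + 2)).trace
      = N⁻¹ ^ (j + 2) * ((∑ p, Drf Cr' Cf' HR HF p) ^ (j + 2)).trace := by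
        rw [Dmix, smul_pow, trace_smul, smul_eq_mul]
    _ ≤ N⁻¹ ^ (j + 2) * (N * lamMax (Smat Cr' Cf' HR HF) ^ (j + 2)) := by
        rw [← hcard]
        exact mul_le_mul_of_nonneg_left hbound (by positivity)
    _ = N ^ ((1 : ℤ) - ((j + 2 : ℕ) : ℤ)) * lamMax (Smat Cr' Cf' HR HF) ^ (j + 2) := by
        rw [← hscale]
        ring

/-- coherence bound on powers of the mix-Hessian.  For every
`k ≥ 2`, `Tr(D^k) ≤ (n_r n_f)^{1−k} λ_max(S)^k`. -/
theorem stmt13 (d nr nf : ℕ) (hd : 1 ≤ d) (hnr : 1 ≤ nr) (hnf : 1 ≤ nf)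
    (HR : Fin nr → Matrix (Fin d) (Fin d) ℝ) (HF : Fin nf → Matrix (Fin d) (Fin d) ℝ)
    (hHR : ∀ r, (HR r).PosSemidef) (hHF : ∀ f, (HF f).PosSemidef)
    (Cr' Cf' : ℝ) (hCr : 0 ≤ Cr') (hCf : 0 ≤ Cf') (hsum : Cr' + Cf' = 1) :
    ∀ k : ℕ, 2 ≤ k →
      ((Dmix Cr' Cf' HR HF ^ k).trace) ≤
        ((nr : ℝ) * nf) ^ ((1 : ℤ) - (k : ℤ)) * lamMax (Smat Cr' Cf' HR HF) ^ k :=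
  stmt13_general d nr nf HR HF hHR hHF Cr' Cf' hCr hCf
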